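/- arXiv:1106.1049 — 2 statements merged into one kernel-verified Lean document; each statement's English description precedes it below -/
import Mathlib

section
/- Let f : {-1,1}^n → ℝ be a pseudo-Boolean function of Fourier width ρ ≥ 1, and let q > p ≥ 2 be reals. Then ||f||_q ≤ ((2r)! · ρ^{r-1})^{1/(2r)} · ||f||_p, where r = ⌈q/2⌉. -/
/-- The ±1 value of a Boolean coordinate. -/
noncomputable def sgn (b : Bool) : ℝ := if b then 1 else -1

/-- Expectation of `g` over the uniform distribution on `{-1,1}^n`
(coordinates encoded as `Bool`). -/
noncomputable def pbExp (n : ℕ) (g : (Fin n → Bool) → ℝ) : ℝ :=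
  (∑ x : Fin n → Bool, g x) / 2 ^ n

/-- The character `χ_I(x) = ∏_{i ∈ I} x_i`. -/
noncomputable def chi {n : ℕ} (I : Finset (Fin n)) (x : Fin n → Bool) : ℝ :=
  ∏ i ∈ I, sgn (x i)

/-- The `p`-norm `‖f‖_p = (E[|f(x)|^p])^{1/p}`. -/
noncomputable def pbNorm (n : ℕ) (p : ℝ) (f : (Fin n → Bool) → ℝ) : ℝ :=
  (pbExp n (fun x => |f x| ^ p)) ^ (1 / p)

/-!
Since `p ↦ ‖f‖_p` is nondecreasing (Jensen), it suffices to bound `‖f‖_{2r}` by `‖f‖_2`, i.e. to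
show `E[f^{2r}] ≤ (2r)! ρ^{r-1} (∑ ŵ(I)²)^r`, as `E[f²] = ∑ ŵ(I)²` by Parseval. This moment bound
is proved by induction on the coordinates. Write `f = G + x_i H` with `G`, `H` independent of
`x_i`; the symmetry `x_i ↦ -x_i` kills the odd powers of `H`, so
`E[f^{2r}] = ∑_m C(2r,2m) E[G^{2m} H^{2(r-m)}]`. Since at most `ρ` sets contain `i`,
Cauchy–Schwarz gives `H² ≤ ρ b` pointwise with `b = ∑_{I ∋ i} ŵ(I)²`, and the induction hypothesis
bounds `E[G^{2m}]`. As `C(2r,2m) (2m)! ≤ (2r)! C(r,m)`, the binomial theorem reassembles the sum.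
-/

open Finset
open scoped Nat

section

variable {n : ℕ}

lemma sgn_sq (b : Bool) : sgn b ^ 2 = 1 := by cases b <;> simp [sgn]

lemma chi_sq (I : Finset (Fin n)) (x : Fin n → Bool) : chi I x ^ 2 = 1 := by
  simp [chi, ← prod_pow, sgn_sq]

lemma chi_eq_sgn_mul_chi_erase {I : Finset (Fin n)} {i : Fin n} (hi : i ∈ I)
    (x : Fin n → Bool) : chi I x = sgn (x i) * chi (I.erase i) x :=
  (mul_prod_erase I (fun j => sgn (x j)) hi).symm

def flipAt (i : Fin n) : Equiv.Perm (Fin n → Bool) :=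
  Function.Involutive.toPerm (fun x => Function.update x i (!x i)) fun x => by
    ext j
    by_cases h : j = i
    · subst h; simp
    · simp [Function.update_of_ne h]

lemma flipAt_apply_self (i : Fin n) (x : Fin n → Bool) : flipAt i x i = !x i :=
  Function.update_self ..

lemma flipAt_apply_of_ne {i j : Fin n} (h : j ≠ i) (x : Fin n → Bool) : flipAt i x j = x j :=
  Function.update_of_ne h ..

lemma sgn_flipAt_apply_self (i : Fin n) (x : Fin n → Bool) :
    sgn (flipAt i x i) = -sgn (x i) := by
  cases h : x i <;> simp [flipAt_apply_self, h, sgn]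

lemma chi_flipAt_of_notMem {I : Finset (Fin n)} {i : Fin n} (hi : i ∉ I) (x : Fin n → Bool) :
    chi I (flipAt i x) = chi I x :=
  prod_congr rfl fun j hj => by rw [flipAt_apply_of_ne (ne_of_mem_of_not_mem hj hi)]

lemma chi_flipAt_of_mem {I : Finset (Fin n)} {i : Fin n} (hi : i ∈ I) (x : Fin n → Bool) :
    chi I (flipAt i x) = -chi I x := by
  rw [chi_eq_sgn_mul_chi_erase hi, chi_eq_sgn_mul_chi_erase hi,
    chi_flipAt_of_notMem (notMem_erase i I), sgn_flipAt_apply_self, neg_mul]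

lemma pbExp_const (n : ℕ) (c : ℝ) : pbExp n (fun _ => c) = c := by
  simp [pbExp]

lemma pbExp_add (g h : (Fin n → Bool) → ℝ) :
    pbExp n (fun x => g x + h x) = pbExp n g + pbExp n h := by
  simp only [pbExp, sum_add_distrib, add_div]

lemma pbExp_sum {ι : Type*} (T : Finset ι) (g : ι → (Fin n → Bool) → ℝ) :
    pbExp n (fun x => ∑ t ∈ T, g t x) = ∑ t ∈ T, pbExp n (g t) := by
  simp only [pbExp, sum_comm (s := univ), sum_div]

lemma pbExp_const_mul (c : ℝ) (g : (Fin n → Bool) → ℝ) :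
    pbExp n (fun x => c * g x) = c * pbExp n g := by
  simp only [pbExp, ← mul_sum, mul_div_assoc]

lemma pbExp_mono {g h : (Fin n → Bool) → ℝ} (hgh : ∀ x, g x ≤ h x) :
    pbExp n g ≤ pbExp n h := by
  unfold pbExp
  gcongr with x
  exact hgh x

lemma pbExp_nonneg {g : (Fin n → Bool) → ℝ} (hg : ∀ x, 0 ≤ g x) : 0 ≤ pbExp n g :=
  pbExp_const n 0 ▸ pbExp_mono hg

lemma pbExp_comp_perm (e : Equiv.Perm (Fin n → Bool)) (g : (Fin n → Bool) → ℝ) :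
    pbExp n (fun x => g (e x)) = pbExp n g := by
  unfold pbExp
  rw [Equiv.sum_comp e g]

lemma pbExp_eq_zero_of_flipAt {g : (Fin n → Bool) → ℝ} (i : Fin n)
    (hg : ∀ x, g (flipAt i x) = -g x) : pbExp n g = 0 := by
  have hinv := pbExp_comp_perm (flipAt i) g
  have hneg : pbExp n (fun x => -g x) = -pbExp n g := by simpa using pbExp_const_mul (-1) g
  simp only [hg, hneg] at hinv
  linarith

lemma pbExp_chi_mul_chi (A B : Finset (Fin n)) :
    pbExp n (fun x => chi A x * chi B x) = if A = B then 1 else 0 := by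
  split_ifs with hAB
  · subst hAB
    simp only [← sq, chi_sq, pbExp_const]
  · obtain ⟨i, hi⟩ : ∃ i, ¬(i ∈ A ↔ i ∈ B) := by
      by_contra! h
      exact hAB (Finset.ext h)
    refine pbExp_eq_zero_of_flipAt i fun x => ?_
    by_cases hA : i ∈ A
    · rw [chi_flipAt_of_mem hA, chi_flipAt_of_notMem (by tauto), neg_mul]
    · rw [chi_flipAt_of_notMem hA, chi_flipAt_of_mem (by tauto), mul_neg]

lemma pbExp_sum_mul_chi_sq {ι : Type*} (T : Finset ι) (c : ι → ℝ) {m : ι → Finset (Fin n)}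
    (hm : Set.InjOn m T) :
    pbExp n (fun x => (∑ t ∈ T, c t * chi (m t) x) ^ 2) = ∑ t ∈ T, c t ^ 2 := by
  classical
  have hterm : ∀ s ∈ T, ∀ t ∈ T,
      pbExp n (fun x => c s * chi (m s) x * (c t * chi (m t) x)) =
        if s = t then c s ^ 2 else 0 := by
    intro s hs t ht
    simp_rw [mul_mul_mul_comm (c s)]
    rw [pbExp_const_mul, pbExp_chi_mul_chi]
    simp only [hm.eq_iff hs ht]
    split_ifs with h <;> simp [h, sq]
  simp_rw [sq, sum_mul_sum, pbExp_sum]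
  refine sum_congr rfl fun s hs => ?_
  rw [sum_congr rfl (hterm s hs), sum_ite_eq, if_pos hs, sq]

lemma sq_sum_mul_chi_le {ι : Type*} (T : Finset ι) (c : ι → ℝ) (m : ι → Finset (Fin n))
    (x : Fin n → Bool) :
    (∑ t ∈ T, c t * chi (m t) x) ^ 2 ≤ #T * ∑ t ∈ T, c t ^ 2 := by
  simpa [mul_pow, chi_sq] using sq_sum_le_card_mul_sum_sq (s := T) (f := fun t => c t * chi (m t) x)

lemma sum_mul_chi_flipAt {ι : Type*} {T : Finset ι} (c : ι → ℝ) {m : ι → Finset (Fin n)}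
    {i : Fin n} (hi : ∀ t ∈ T, i ∉ m t) (x : Fin n → Bool) :
    ∑ t ∈ T, c t * chi (m t) (flipAt i x) = ∑ t ∈ T, c t * chi (m t) x :=
  sum_congr rfl fun t ht => by rw [chi_flipAt_of_notMem (hi t ht)]

lemma sum_mul_chi_eq_add_sgn_mul (𝓕 : Finset (Finset (Fin n))) (w : Finset (Fin n) → ℝ)
    (i : Fin n) (x : Fin n → Bool) :
    ∑ I ∈ 𝓕, w I * chi I x = ∑ I ∈ 𝓕 with i ∉ I, w I * chi I x +
      sgn (x i) * ∑ I ∈ 𝓕 with i ∈ I, w I * chi (I.erase i) x := by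
  rw [← sum_filter_not_add_sum_filter 𝓕 (i ∈ ·), mul_sum]
  congr 1
  refine sum_congr rfl fun I hI => ?_
  rw [chi_eq_sgn_mul_chi_erase (mem_filter.1 hI).2]
  ring

lemma Finset.sum_range_two_mul_add_one_of_odd {M : Type*} [AddCommMonoid M] (N : ℕ)
    (v : ℕ → M) (hv : ∀ j, Odd j → v j = 0) :
    ∑ j ∈ range (2 * N + 1), v j = ∑ m ∈ range (N + 1), v (2 * m) := by
  induction N with
  | zero => simp
  | succ N ih =>
    rw [sum_range_succ (fun m => v (2 * m)) (N + 1), ← ih,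
      show 2 * (N + 1) + 1 = 2 * N + 1 + 1 + 1 by ring, sum_range_succ, sum_range_succ,
      hv _ (odd_two_mul_add_one N), add_zero, mul_add_one]

lemma add_pow_two_mul_add_sub_pow_two_mul {R : Type*} [CommRing R] (a b : R) (r : ℕ) :
    (a + b) ^ (2 * r) + (a - b) ^ (2 * r) =
      2 * ∑ m ∈ range (r + 1), ((2 * r).choose (2 * m) : R) * a ^ (2 * m) * b ^ (2 * (r - m)) := by
  rw [sub_eq_add_neg, add_pow, add_pow, ← sum_add_distrib,
    sum_range_two_mul_add_one_of_odd, mul_sum]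
  · refine sum_congr rfl fun m hm => ?_
    rw [← Nat.mul_sub, neg_pow, pow_mul (-1), neg_one_sq, one_pow]
    ring
  · intro j hj
    rcases le_or_gt j (2 * r) with hle | hlt
    · have hodd : Odd (2 * r - j) := Nat.Even.sub_odd hle (even_two_mul r) hj
      rw [neg_pow, hodd.neg_one_pow]
      ring
    · simp [Nat.choose_eq_zero_of_lt hlt]

lemma pbExp_pow_two_mul_eq {G H : (Fin n → Bool) → ℝ} {i : Fin n}
    (hG : ∀ x, G (flipAt i x) = G x) (hH : ∀ x, H (flipAt i x) = H x) (r : ℕ) :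
    pbExp n (fun x => (G x + sgn (x i) * H x) ^ (2 * r)) =
      ∑ m ∈ range (r + 1),
        ((2 * r).choose (2 * m) : ℝ) * pbExp n (fun x => G x ^ (2 * m) * H x ^ (2 * (r - m))) := by
  set F := fun x => (G x + sgn (x i) * H x) ^ (2 * r)
  have hpair : ∀ x, F x + F (flipAt i x) = 2 * ∑ m ∈ range (r + 1),
      ((2 * r).choose (2 * m) : ℝ) * (G x ^ (2 * m) * H x ^ (2 * (r - m))) := by
    intro x
    simp only [F, hG, hH, sgn_flipAt_apply_self, neg_mul, ← sub_eq_add_neg,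
      add_pow_two_mul_add_sub_pow_two_mul, mul_pow, pow_mul (sgn (x i)), sgn_sq, one_pow, one_mul,
      mul_assoc]
  have h := congrArg (pbExp n) (funext hpair)
  simp only [pbExp_add, pbExp_comp_perm, pbExp_const_mul, pbExp_sum] at h
  linarith

lemma Nat.choose_mul_factorial_le_factorial {N k : ℕ} (hk : k ≤ N) : N.choose k * k ! ≤ N ! := by
  rw [← choose_mul_factorial_mul_factorial hk]
  exact Nat.le_mul_of_pos_right _ (factorial_pos _)

lemma pbExp_mul_pow_le_of_sq_le {g H : (Fin n → Bool) → ℝ} {M : ℝ} (hg : ∀ x, 0 ≤ g x)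
    (hH : ∀ x, H x ^ 2 ≤ M) (k : ℕ) :
    pbExp n (fun x => g x * H x ^ (2 * k)) ≤ M ^ k * pbExp n g := by
  rw [← pbExp_const_mul]
  refine pbExp_mono fun x => ?_
  rw [pow_mul, mul_comm (M ^ k)]
  exact mul_le_mul_of_nonneg_left (pow_le_pow_left₀ (sq_nonneg _) (hH x) k) (hg x)

lemma pbExp_sum_mul_chi_pow_le_of_filter_notMem {𝓕 : Finset (Finset (Fin n))}
    {w : Finset (Fin n) → ℝ} {ρ : ℕ} {i : Fin n} (hwidth : #{I ∈ 𝓕 | i ∈ I} ≤ ρ)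
    (ih : ∀ m, 1 ≤ m → pbExp n (fun x => (∑ I ∈ 𝓕 with i ∉ I, w I * chi I x) ^ (2 * m)) ≤
      (2 * m)! * (ρ : ℝ) ^ (m - 1) * (∑ I ∈ 𝓕 with i ∉ I, w I ^ 2) ^ m)
    {r : ℕ} (hr : 1 ≤ r) :
    pbExp n (fun x => (∑ I ∈ 𝓕, w I * chi I x) ^ (2 * r)) ≤
      (2 * r)! * (ρ : ℝ) ^ (r - 1) * (∑ I ∈ 𝓕, w I ^ 2) ^ r := by
  set G := fun x => ∑ I ∈ 𝓕 with i ∉ I, w I * chi I x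
  set H := fun x => ∑ I ∈ 𝓕 with i ∈ I, w I * chi (I.erase i) x
  set a := ∑ I ∈ 𝓕 with i ∉ I, w I ^ 2
  set b := ∑ I ∈ 𝓕 with i ∈ I, w I ^ 2
  have ha : 0 ≤ a := sum_nonneg fun I _ => sq_nonneg _
  have hb : 0 ≤ b := sum_nonneg fun I _ => sq_nonneg _
  have hHsq : ∀ x, H x ^ 2 ≤ ρ * b := fun x =>
    (sq_sum_mul_chi_le _ _ _ x).trans (by gcongr)
  have hH2 : pbExp n (fun x => H x ^ 2) = b := by
    refine pbExp_sum_mul_chi_sq _ _ fun I hI J hJ hIJ => ?_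
    rw [← insert_erase (mem_filter.1 hI).2, ← insert_erase (mem_filter.1 hJ).2]
    exact congrArg (insert i) hIJ
  have hterm : ∀ m ≤ r, pbExp n (fun x => G x ^ (2 * m) * H x ^ (2 * (r - m))) ≤
      (2 * m)! * (ρ : ℝ) ^ (r - 1) * (a ^ m * b ^ (r - m)) := by
    intro m hm
    rcases Nat.eq_zero_or_pos m with rfl | hpos
    · -- One factor `H²` is left to Parseval: this is why the constant has `ρ ^ (r - 1)`.
      obtain ⟨k, rfl⟩ : ∃ k, r = k + 1 := ⟨r - 1, by omega⟩
      calc pbExp n (fun x => G x ^ (2 * 0) * H x ^ (2 * (k + 1 - 0)))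
          = pbExp n (fun x => H x ^ 2 * H x ^ (2 * k)) := by
            simp only [Nat.sub_zero, mul_zero, pow_zero, one_mul, ← pow_add, mul_add_one, add_comm]
        _ ≤ (ρ * b) ^ k * pbExp n (fun x => H x ^ 2) :=
          pbExp_mul_pow_le_of_sq_le (fun x => sq_nonneg _) hHsq k
        _ = _ := by
          simp only [hH2, mul_zero, Nat.factorial_zero, Nat.cast_one, one_mul, pow_zero,
            Nat.add_sub_cancel, Nat.sub_zero]
          ring
    · calc pbExp n (fun x => G x ^ (2 * m) * H x ^ (2 * (r - m)))
          ≤ (ρ * b) ^ (r - m) * pbExp n (fun x => G x ^ (2 * m)) :=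
          pbExp_mul_pow_le_of_sq_le (fun x => by rw [pow_mul]; positivity) hHsq _
        _ ≤ (ρ * b) ^ (r - m) * ((2 * m)! * (ρ : ℝ) ^ (m - 1) * a ^ m) := by
          gcongr
          exact ih m hpos
        _ = (2 * m)! * (ρ : ℝ) ^ (r - m + (m - 1)) * (a ^ m * b ^ (r - m)) := by ring
        _ = _ := by rw [show r - m + (m - 1) = r - 1 by omega]
  calc pbExp n (fun x => (∑ I ∈ 𝓕, w I * chi I x) ^ (2 * r))
      = ∑ m ∈ range (r + 1), ((2 * r).choose (2 * m) : ℝ) *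
          pbExp n (fun x => G x ^ (2 * m) * H x ^ (2 * (r - m))) := by
        simp only [sum_mul_chi_eq_add_sgn_mul 𝓕 w i]
        exact pbExp_pow_two_mul_eq (sum_mul_chi_flipAt w fun I hI => (mem_filter.1 hI).2)
          (sum_mul_chi_flipAt w fun I _ => notMem_erase i I) r
    _ ≤ ∑ m ∈ range (r + 1), ((2 * r).choose (2 * m) : ℝ) *
          ((2 * m)! * (ρ : ℝ) ^ (r - 1) * (a ^ m * b ^ (r - m))) := by
        gcongr with m hm
        exact hterm m (Nat.lt_succ_iff.1 (mem_range.1 hm))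
    _ ≤ ∑ m ∈ range (r + 1),
          (2 * r)! * (ρ : ℝ) ^ (r - 1) * (a ^ m * b ^ (r - m) * r.choose m) := by
        refine sum_le_sum fun m hm => ?_
        have hmr : m ≤ r := Nat.lt_succ_iff.1 (mem_range.1 hm)
        have hcoef : (2 * r).choose (2 * m) * (2 * m)! ≤ (2 * r)! * r.choose m :=
          (Nat.choose_mul_factorial_le_factorial (by omega)).trans
            (Nat.le_mul_of_pos_right _ (Nat.choose_pos hmr))
        calc ((2 * r).choose (2 * m) : ℝ) * ((2 * m)! * (ρ : ℝ) ^ (r - 1) * (a ^ m * b ^ (r - m)))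
            = ((2 * r).choose (2 * m) * (2 * m)! : ℕ) *
                ((ρ : ℝ) ^ (r - 1) * (a ^ m * b ^ (r - m))) := by
              push_cast; ring
          _ ≤ ((2 * r)! * r.choose m : ℕ) * ((ρ : ℝ) ^ (r - 1) * (a ^ m * b ^ (r - m))) := by
              gcongr
          _ = _ := by push_cast; ring
    _ = (2 * r)! * (ρ : ℝ) ^ (r - 1) * (∑ I ∈ 𝓕, w I ^ 2) ^ r := by
        rw [← mul_sum, ← add_pow, ← sum_filter_not_add_sum_filter 𝓕 (i ∈ ·)]

theorem pbExp_sum_mul_chi_pow_le {𝓕 : Finset (Finset (Fin n))} (w : Finset (Fin n) → ℝ)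
    {ρ : ℕ} (hρ : 1 ≤ ρ) (hwidth : ∀ i, #{I ∈ 𝓕 | i ∈ I} ≤ ρ) {r : ℕ} (hr : 1 ≤ r) :
    pbExp n (fun x => (∑ I ∈ 𝓕, w I * chi I x) ^ (2 * r)) ≤
      (2 * r)! * (ρ : ℝ) ^ (r - 1) * (∑ I ∈ 𝓕, w I ^ 2) ^ r := by
  obtain ⟨S, hS⟩ : ∃ S, ∀ I ∈ 𝓕, I ⊆ S := ⟨univ, fun I _ => subset_univ I⟩
  induction S using Finset.induction_on generalizing 𝓕 r with
  | empty =>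
    have hC : (1 : ℝ) ≤ (2 * r)! * (ρ : ℝ) ^ (r - 1) :=
      one_le_mul_of_one_le_of_one_le (mod_cast (2 * r).factorial_pos)
        (one_le_pow₀ (mod_cast hρ))
    rcases subset_singleton_iff.1 fun I hI => mem_singleton.2 (subset_empty.1 (hS I hI))
      with rfl | rfl
    · simp [pbExp_const, zero_pow (by omega : 2 * r ≠ 0), zero_pow (by omega : r ≠ 0)]
    · simp only [sum_singleton, chi, prod_empty, mul_one, pbExp_const, ← pow_mul]
      exact le_mul_of_one_le_left ((even_two_mul r).pow_nonneg _) hC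
  | insert i S hi ih =>
    refine pbExp_sum_mul_chi_pow_le_of_filter_notMem (hwidth i)
      (fun m hm => ih (fun j => ?_) hm fun I hI => ?_) hr
    · exact (card_le_card (filter_subset_filter _ (filter_subset _ _))).trans (hwidth j)
    · rw [mem_filter] at hI
      exact (subset_insert_iff_of_notMem hI.2).1 (hS I hI.1)

lemma pbExp_le_pbExp_rpow {g : (Fin n → Bool) → ℝ} (hg : ∀ x, 0 ≤ g x) {P : ℝ} (hP : 1 ≤ P) :
    pbExp n g ≤ pbExp n (fun x => g x ^ P) ^ (1 / P) := by
  have hweights : ∑ _x : Fin n → Bool, ((2 : ℝ) ^ n)⁻¹ = 1 := by simp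
  rw [pbExp, pbExp, sum_div, sum_div]
  simpa only [div_eq_inv_mul] using
    Real.arith_mean_le_rpow_mean univ (fun _ => ((2 : ℝ) ^ n)⁻¹) g (fun _ _ => by positivity)
      hweights (fun x _ => hg x) hP

lemma pbNorm_mono {s t : ℝ} (hs : 0 < s) (hst : s ≤ t) (f : (Fin n → Bool) → ℝ) :
    pbNorm n s f ≤ pbNorm n t f := by
  have hpow : ∀ x, (|f x| ^ s) ^ (t / s) = |f x| ^ t := fun x => by
    rw [← Real.rpow_mul (abs_nonneg _), mul_div_cancel₀ _ hs.ne']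
  have hjensen := pbExp_le_pbExp_rpow (fun x => Real.rpow_nonneg (abs_nonneg (f x)) s)
    ((one_le_div hs).2 hst)
  simp only [hpow] at hjensen
  have hnonneg : 0 ≤ pbExp n (fun x => |f x| ^ t) :=
    pbExp_nonneg fun x => Real.rpow_nonneg (abs_nonneg _) _
  calc pbNorm n s f ≤ (pbExp n (fun x => |f x| ^ t) ^ (1 / (t / s))) ^ (1 / s) :=
        Real.rpow_le_rpow (pbExp_nonneg fun x => Real.rpow_nonneg (abs_nonneg _) _) hjensen
          (by positivity)
    _ = pbNorm n t f := by
        rw [pbNorm, ← Real.rpow_mul hnonneg]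
        congr 1
        field_simp

lemma pbNorm_two_mul (k : ℕ) (f : (Fin n → Bool) → ℝ) :
    pbNorm n (2 * k) f = pbExp n (fun x => f x ^ (2 * k)) ^ (1 / (2 * k : ℝ)) := by
  have hpow : ∀ x, |f x| ^ (2 * k : ℝ) = f x ^ (2 * k) := fun x => by
    rw [← Nat.cast_ofNat, ← Nat.cast_mul, Real.rpow_natCast, pow_mul, sq_abs, ← pow_mul]
  simp only [pbNorm, hpow]

end

theorem hypercontractive_qp_width_general (n ρ : ℕ) (hρ1 : 1 ≤ ρ)
    (𝓕 : Finset (Finset (Fin n)))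
    (w : Finset (Fin n) → ℝ)
    (f : (Fin n → Bool) → ℝ) (hf : ∀ x, f x = ∑ I ∈ 𝓕, w I * chi I x)
    (hρ : ∀ i : Fin n, (𝓕.filter (fun I => i ∈ I)).card ≤ ρ)
    (p q : ℝ) (hp : 2 ≤ p) (hpq : p < q) :
    pbNorm n q f ≤
      (((2 * ⌈q / 2⌉₊).factorial * ρ ^ (⌈q / 2⌉₊ - 1) : ℕ) : ℝ) ^ (1 / (2 * ⌈q / 2⌉₊ : ℝ)) *
        pbNorm n p f := by
  obtain rfl : f = fun x => ∑ I ∈ 𝓕, w I * chi I x := funext hf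
  set r := ⌈q / 2⌉₊
  have hr : 1 ≤ r := Nat.one_le_iff_ne_zero.2 (Nat.ceil_pos.2 (by linarith)).ne'
  have hqr : q ≤ 2 * r := by linarith [Nat.le_ceil (q / 2)]
  set W := ∑ I ∈ 𝓕, w I ^ 2
  have hW : 0 ≤ W := sum_nonneg fun I _ => sq_nonneg _
  have hparseval : pbNorm n 2 (fun x => ∑ I ∈ 𝓕, w I * chi I x) = W ^ (1 / 2 : ℝ) := by
    have h := pbNorm_two_mul 1 (fun x => ∑ I ∈ 𝓕, w I * chi I x)
    rw [pbExp_sum_mul_chi_sq 𝓕 w fun I _ J _ h => h] at h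
    simpa using h
  have hmoment := pbExp_sum_mul_chi_pow_le w hρ1 hρ hr
  calc pbNorm n q _ ≤ pbNorm n (2 * r) _ := pbNorm_mono (by linarith) hqr _
    _ ≤ ((2 * r)! * (ρ : ℝ) ^ (r - 1) * W ^ r) ^ (1 / (2 * r : ℝ)) := by
        rw [pbNorm_two_mul]
        exact Real.rpow_le_rpow (pbExp_nonneg fun x => by rw [pow_mul]; positivity) hmoment
          (by positivity)
    _ = (((2 * r)! * ρ ^ (r - 1) : ℕ) : ℝ) ^ (1 / (2 * r : ℝ)) * W ^ (1 / 2 : ℝ) := by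
        rw [Real.mul_rpow (by positivity) (by positivity), ← Real.rpow_natCast W,
          ← Real.rpow_mul hW]
        push_cast
        field_simp
    _ ≤ _ := by
        rw [← hparseval]
        gcongr
        exact pbNorm_mono two_pos hp _

/-- **Hypercontractive Inequality for bounded Fourier width (general `q > p ≥ 2`).**
If `f : {-1,1}^n → ℝ` has Fourier width `ρ ≥ 1` and `q > p ≥ 2` are reals, then
`‖f‖_q ≤ ((2r)! ρ^{r-1})^{1/(2r)} ‖f‖_p`, where `r = ⌈q/2⌉`. -/
theorem hypercontractive_qp_width (n ρ : ℕ) (hρ1 : 1 ≤ ρ)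
    (𝓕 : Finset (Finset (Fin n)))
    (w : Finset (Fin n) → ℝ) (hw : ∀ I ∈ 𝓕, w I ≠ 0)
    (f : (Fin n → Bool) → ℝ) (hf : ∀ x, f x = ∑ I ∈ 𝓕, w I * chi I x)
    (hρ : ∀ i : Fin n, (𝓕.filter (fun I => i ∈ I)).card ≤ ρ)
    (p q : ℝ) (hp : 2 ≤ p) (hpq : p < q) :
    pbNorm n q f ≤
      (((2 * ⌈q / 2⌉₊).factorial * ρ ^ (⌈q / 2⌉₊ - 1) : ℕ) : ℝ) ^ (1 / (2 * ⌈q / 2⌉₊ : ℝ)) *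
        pbNorm n p f :=
  hypercontractive_qp_width_general n ρ hρ1 𝓕 w f hf hρ p q hp hpq
end

section
/- Consider a system S of m equations ∏_{i ∈ I_j} x_i = b_j (j = 1,…,m), where the I_j are distinct nonempty subsets of [n], b_j ∈ {-1,1}, and each equation j carries a positive integral weight w_j; let W = Σ_{j=1}^m w_j, and suppose every variable index i ∈ [n] appears in at most ρ of the sets I_j. Then there exists an assignment x ∈ {-1,1}^n such that the total weight of satisfied equations is at least W/2 + (1/4)·√(m/(2ρ+1)). -/
/-!
Put `Q(x) = ∑ⱼ wⱼ bⱼ χ_{I_j}(x)` with the Walsh characters `χ_A(x) = ∏_{i ∈ A} xᵢ`, so that the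
satisfied weight is `W/2 + Q(x)/2`. Over the uniform cube `Q` has mean `0` (the `I_j` are
nonempty) and, the characters being orthonormal and the `I_j` distinct, second moment
`S = ∑ⱼ wⱼ² ≥ m`. Expanding `Q²` in the characters `χ_{I_j ∆ I_k}`, a nonempty set arises from
at most `2ρ` pairs `(j, k)` (one of `I_j`, `I_k` contains a fixed variable of it, and determines
the other), so Cauchy–Schwarz on each fibre gives `E Q⁴ ≤ (2ρ + 1) S²`. The fourth-moment bound
`E |Q| ≥ (E Q²)^{3/2} / (E Q⁴)^{1/2}` then gives `E |Q| ≥ √(S / (2ρ + 1))`, and as `E Q = 0` some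
`x` has `Q(x) ≥ √(S / (2ρ + 1)) / 2`.
-/

open scoped Classical

open Finset
open scoped symmDiff

lemma sgn_mul_self (b : Bool) : sgn b * sgn b = 1 := by
  cases b <;> norm_num [sgn]

noncomputable def walsh {ι : Type*} (A : Finset ι) (x : ι → Bool) : ℝ := ∏ i ∈ A, sgn (x i)

section Walsh

variable {ι J : Type*}

lemma walsh_eq_one_or_neg_one (A : Finset ι) (x : ι → Bool) :
    walsh A x = 1 ∨ walsh A x = -1 := by
  refine prod_induction _ (fun r => r = 1 ∨ r = -1) ?_ (Or.inl rfl) fun i _ => ?_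
  · rintro _ _ (rfl | rfl) (rfl | rfl) <;> norm_num
  · cases x i <;> simp [sgn]

lemma walsh_mul_self (A : Finset ι) (x : ι → Bool) : walsh A x * walsh A x = 1 := by
  rw [walsh, ← prod_mul_distrib]
  exact prod_eq_one fun i _ => sgn_mul_self (x i)

lemma walsh_mul_walsh [DecidableEq ι] (A B : Finset ι) (x : ι → Bool) :
    walsh A x * walsh B x = walsh (A ∆ B) x := by
  calc walsh A x * walsh B x = walsh (A ∪ B) x * walsh (A ∩ B) x := prod_union_inter.symm
    _ = walsh (A ∆ B) x * (walsh (A ∩ B) x * walsh (A ∩ B) x) := by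
      rw [walsh, ← prod_sdiff inter_subset_union, symmDiff_eq_sup_sdiff_inf]
      simp only [walsh, sup_eq_union, inf_eq_inter]
      ring
    _ = walsh (A ∆ B) x := by rw [walsh_mul_self, mul_one]

lemma sq_sum_mul_walsh [DecidableEq ι] [Fintype J] (F : J → Finset ι) (c : J → ℝ)
    (x : ι → Bool) :
    (∑ j, c j * walsh (F j) x) ^ 2 =
      ∑ p : J × J, c p.1 * c p.2 * walsh (F p.1 ∆ F p.2) x := by
  rw [sq, sum_mul_sum, ← Fintype.sum_prod_type']
  exact sum_congr rfl fun p _ => by rw [← walsh_mul_walsh]; ring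

variable [Fintype ι] [DecidableEq ι]

lemma sum_walsh (A : Finset ι) :
    ∑ x : ι → Bool, walsh A x = if A = ∅ then 2 ^ Fintype.card ι else 0 := by
  have hsum : ∀ i, ∑ b : Bool, (if i ∈ A then sgn b else 1) = if i ∈ A then 0 else 2 := by
    intro i
    split_ifs <;> norm_num [sgn]
  calc ∑ x : ι → Bool, walsh A x
      = ∑ x : ι → Bool, ∏ i, (if i ∈ A then sgn (x i) else 1) := by
        simp only [walsh, prod_ite_mem, univ_inter]
    _ = ∏ i, (if i ∈ A then (0 : ℝ) else 2) := by
        rw [← Fintype.prod_sum (fun i b => if i ∈ A then sgn b else 1)]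
        exact prod_congr rfl fun i _ => hsum i
    _ = if A = ∅ then 2 ^ Fintype.card ι else 0 := by
        split_ifs with hA
        · simp [hA]
        · obtain ⟨i, hi⟩ := nonempty_iff_ne_empty.mpr hA
          exact prod_eq_zero (mem_univ i) (if_pos hi)

lemma sum_walsh_mul_walsh (A B : Finset ι) :
    ∑ x : ι → Bool, walsh A x * walsh B x = if A = B then 2 ^ Fintype.card ι else 0 := by
  simp only [walsh_mul_walsh, sum_walsh, ← bot_eq_empty, symmDiff_eq_bot]

lemma sum_sq_sum_mul_walsh (a : Finset ι → ℝ) :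
    ∑ x : ι → Bool, (∑ A, a A * walsh A x) ^ 2 = 2 ^ Fintype.card ι * ∑ A, a A ^ 2 := by
  calc ∑ x : ι → Bool, (∑ A, a A * walsh A x) ^ 2
      = ∑ x : ι → Bool, ∑ A, ∑ B, a A * a B * (walsh A x * walsh B x) :=
        sum_congr rfl fun x _ => by
          rw [sq, sum_mul_sum]
          exact sum_congr rfl fun A _ => sum_congr rfl fun B _ => by ring
    _ = ∑ A, ∑ B, a A * a B * ∑ x : ι → Bool, walsh A x * walsh B x := by
        simp only [mul_sum]
        rw [sum_comm]
        exact sum_congr rfl fun A _ => sum_comm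
    _ = 2 ^ Fintype.card ι * ∑ A, a A ^ 2 := by
        simp only [sum_walsh_mul_walsh, mul_ite, mul_zero, sum_ite_eq, mem_univ, if_true,
          mul_sum]
        exact sum_congr rfl fun A _ => by ring

variable [Fintype J]

lemma sum_mul_walsh_eq_sum_fiberwise (F : J → Finset ι) (c : J → ℝ) (x : ι → Bool) :
    ∑ j, c j * walsh (F j) x = ∑ A, (∑ j with F j = A, c j) * walsh A x := by
  rw [← sum_fiberwise univ F fun j => c j * walsh (F j) x]
  refine sum_congr rfl fun A _ => ?_
  rw [sum_mul]
  exact sum_congr rfl fun j hj => by rw [(mem_filter.mp hj).2]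

lemma sum_sum_mul_walsh_eq_zero (F : J → Finset ι) (hF : ∀ j, F j ≠ ∅) (c : J → ℝ) :
    ∑ x : ι → Bool, ∑ j, c j * walsh (F j) x = 0 := by
  rw [sum_comm]
  exact sum_eq_zero fun j _ => by rw [← mul_sum, sum_walsh, if_neg (hF j), mul_zero]

lemma sum_sq_sum_mul_walsh_of_injective {F : J → Finset ι} (hF : Function.Injective F)
    (c : J → ℝ) :
    ∑ x : ι → Bool, (∑ j, c j * walsh (F j) x) ^ 2 = 2 ^ Fintype.card ι * ∑ j, c j ^ 2 := by
  simp only [sum_mul_walsh_eq_sum_fiberwise F, sum_sq_sum_mul_walsh]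
  congr 1
  rw [← sum_fiberwise univ F fun j => c j ^ 2]
  refine sum_congr rfl fun A _ => ?_
  obtain ⟨j, hj⟩ | hA := em (∃ j, F j = A)
  · have : ({j' | F j' = A} : Finset J) = {j} := by
      ext j'
      simp only [mem_filter, mem_univ, true_and, mem_singleton, ← hj, hF.eq_iff]
    rw [this, sum_singleton, sum_singleton]
  · have : ({j' | F j' = A} : Finset J) = ∅ := filter_eq_empty_iff.mpr fun j' _ h => hA ⟨j', h⟩
    simp [this]

end Walsh

section Occurrence

variable {ι J : Type*} [DecidableEq ι] {F : J → Finset ι}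

lemma injOn_fst_of_symmDiff_eq (hF : Function.Injective F) (A : Finset ι) :
    Set.InjOn Prod.fst {p : J × J | F p.1 ∆ F p.2 = A} := by
  rintro ⟨j, k⟩ hjk ⟨j', k'⟩ hjk' (rfl : j = j')
  exact Prod.ext rfl (hF (symmDiff_right_injective (F j) ((hjk : _ = A).trans hjk'.symm)))

lemma injOn_snd_of_symmDiff_eq (hF : Function.Injective F) (A : Finset ι) :
    Set.InjOn Prod.snd {p : J × J | F p.1 ∆ F p.2 = A} := by
  rintro ⟨j, k⟩ hjk ⟨j', k'⟩ hjk' (rfl : k = k')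
  exact Prod.ext (hF (symmDiff_left_injective (F k) ((hjk : _ = A).trans hjk'.symm))) rfl

variable [Fintype J] {ρ : ℕ}

lemma card_filter_symmDiff_eq_le (hF : Function.Injective F)
    (hρ : ∀ i, #{j | i ∈ F j} ≤ ρ) {A : Finset ι} (hA : A.Nonempty) :
    #{p : J × J | F p.1 ∆ F p.2 = A} ≤ 2 * ρ := by
  obtain ⟨i, hi⟩ := hA
  have hsplit : ({p : J × J | F p.1 ∆ F p.2 = A} : Finset (J × J)) ⊆
      ({p : J × J | F p.1 ∆ F p.2 = A ∧ i ∈ F p.1} : Finset (J × J)) ∪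
        ({p : J × J | F p.1 ∆ F p.2 = A ∧ i ∈ F p.2} : Finset (J × J)) := by
    intro p hp
    simp only [mem_filter, mem_univ, true_and, mem_union] at hp ⊢
    rcases mem_symmDiff.mp (hp ▸ hi) with ⟨h, -⟩ | ⟨h, -⟩ <;> simp [hp, h]
  have hfst : #{p : J × J | F p.1 ∆ F p.2 = A ∧ i ∈ F p.1} ≤ #{j | i ∈ F j} :=
    card_le_card_of_injOn Prod.fst (fun p hp => by simp_all)
      ((injOn_fst_of_symmDiff_eq hF A).mono fun p hp => by simp_all)
  have hsnd : #{p : J × J | F p.1 ∆ F p.2 = A ∧ i ∈ F p.2} ≤ #{j | i ∈ F j} :=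
    card_le_card_of_injOn Prod.snd (fun p hp => by simp_all)
      ((injOn_snd_of_symmDiff_eq hF A).mono fun p hp => by simp_all)
  calc #{p : J × J | F p.1 ∆ F p.2 = A}
      ≤ #{p : J × J | F p.1 ∆ F p.2 = A ∧ i ∈ F p.1}
        + #{p : J × J | F p.1 ∆ F p.2 = A ∧ i ∈ F p.2} :=
        (card_le_card hsplit).trans (card_union_le _ _)
    _ ≤ 2 * ρ := by linarith [hρ i]

variable [Fintype ι]

lemma sum_sq_sum_filter_symmDiff_eq_le (hF : Function.Injective F)
    (hρ : ∀ i, #{j | i ∈ F j} ≤ ρ) (c : J → ℝ) :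
    ∑ A, (∑ p : J × J with F p.1 ∆ F p.2 = A, c p.1 * c p.2) ^ 2 ≤
      (2 * ρ + 1) * (∑ j, c j ^ 2) ^ 2 := by
  set S := ∑ j, c j ^ 2
  have hdiag : ∑ p : J × J with F p.1 ∆ F p.2 = ∅, c p.1 * c p.2 = S := by
    simp only [← bot_eq_empty, symmDiff_eq_bot, hF.eq_iff, sum_filter, Fintype.sum_prod_type,
      sum_ite_eq, mem_univ, if_true, S, sq]
  have hfiber : ∀ A, A ≠ ∅ → (∑ p : J × J with F p.1 ∆ F p.2 = A, c p.1 * c p.2) ^ 2 ≤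
      2 * ρ * ∑ p : J × J with F p.1 ∆ F p.2 = A, (c p.1 * c p.2) ^ 2 := by
    intro A hA
    refine sq_sum_le_card_mul_sum_sq.trans (mul_le_mul_of_nonneg_right ?_ (by positivity))
    exact_mod_cast card_filter_symmDiff_eq_le hF hρ (nonempty_iff_ne_empty.mpr hA)
  have hsq : ∑ p : J × J, (c p.1 * c p.2) ^ 2 = S ^ 2 := by
    simp only [mul_pow, Fintype.sum_prod_type, S, sq (∑ j, c j ^ 2), sum_mul_sum]
  calc ∑ A, (∑ p : J × J with F p.1 ∆ F p.2 = A, c p.1 * c p.2) ^ 2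
      = S ^ 2 + ∑ A ∈ {∅}ᶜ, (∑ p : J × J with F p.1 ∆ F p.2 = A, c p.1 * c p.2) ^ 2 := by
        rw [Fintype.sum_eq_add_sum_compl ∅, hdiag]
    _ ≤ S ^ 2 +
          ∑ A ∈ {∅}ᶜ, 2 * ρ * ∑ p : J × J with F p.1 ∆ F p.2 = A, (c p.1 * c p.2) ^ 2 := by
        gcongr with A hA
        exact hfiber A (by simpa using hA)
    _ ≤ S ^ 2 + ∑ A, 2 * ρ * ∑ p : J × J with F p.1 ∆ F p.2 = A, (c p.1 * c p.2) ^ 2 := by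
        gcongr
        exact subset_univ _
    _ = (2 * ρ + 1) * S ^ 2 := by
        rw [← mul_sum, sum_fiberwise, hsq]
        ring

lemma sum_pow_four_sum_mul_walsh_le (hF : Function.Injective F)
    (hρ : ∀ i, #{j | i ∈ F j} ≤ ρ) (c : J → ℝ) :
    ∑ x : ι → Bool, (∑ j, c j * walsh (F j) x) ^ 4 ≤
      2 ^ Fintype.card ι * ((2 * ρ + 1) * (∑ j, c j ^ 2) ^ 2) := by
  calc ∑ x : ι → Bool, (∑ j, c j * walsh (F j) x) ^ 4
      = ∑ x : ι → Bool, (∑ p : J × J, c p.1 * c p.2 * walsh (F p.1 ∆ F p.2) x) ^ 2 :=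
        sum_congr rfl fun x _ => by rw [← sq_sum_mul_walsh]; ring
    _ = 2 ^ Fintype.card ι *
          ∑ A, (∑ p : J × J with F p.1 ∆ F p.2 = A, c p.1 * c p.2) ^ 2 := by
        simp only [sum_mul_walsh_eq_sum_fiberwise (fun p : J × J => F p.1 ∆ F p.2)
          (fun p => c p.1 * c p.2), sum_sq_sum_mul_walsh]
    _ ≤ 2 ^ Fintype.card ι * ((2 * ρ + 1) * (∑ j, c j ^ 2) ^ 2) := by
        gcongr
        exact sum_sq_sum_filter_symmDiff_eq_le hF hρ c

end Occurrence

lemma three_mul_sq_sub_pow_four_le {t : ℝ} (ht : 0 < t) (y : ℝ) :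
    3 * t ^ 2 * y ^ 2 - y ^ 4 ≤ 2 * t ^ 3 * |y| := by
  have key : 0 ≤ |y| * (|y| - t) ^ 2 * (|y| + 2 * t) := by positivity
  have hy2 : y ^ 2 = |y| ^ 2 := (sq_abs y).symm
  have hy4 : y ^ 4 = |y| ^ 4 := by rw [← abs_pow, abs_of_nonneg (by positivity)]
  rw [hy2, hy4]
  nlinarith [key]

/-- Summing `three_mul_sq_sub_pow_four_le` with `t = √(Bσ)` gives `∑ |f| ≥ N √(σ / B)`; since
`∑ f = 0`, some term of `∑ (|f| + f)` is at least `√(σ / B)`. -/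
lemma exists_sqrt_div_two_le_of_moments {α : Type*} [Fintype α] [Nonempty α] (f : α → ℝ)
    {σ B : ℝ} (hB : 0 < B) (h1 : ∑ x, f x = 0) (h2 : Fintype.card α * σ ≤ ∑ x, f x ^ 2)
    (h4 : ∑ x, f x ^ 4 ≤ Fintype.card α * (B * σ ^ 2)) :
    ∃ x, √(σ / B) / 2 ≤ f x := by
  rcases le_or_gt σ 0 with hσ | hσ
  · obtain ⟨x, -, hx⟩ := exists_le_of_sum_le (f := 0) (g := f) univ_nonempty (by simp [h1])
    refine ⟨x, ?_⟩
    rw [Real.sqrt_eq_zero'.mpr (div_nonpos_of_nonpos_of_nonneg hσ hB.le)]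
    simpa using hx
  set N : ℝ := (Fintype.card α : ℝ)
  set t := √(B * σ)
  have ht : 0 < t := Real.sqrt_pos.mpr (by positivity)
  have ht2 : t ^ 2 = B * σ := Real.sq_sqrt (by positivity)
  have habs : 2 * t ^ 2 * (N * σ) ≤ 2 * t ^ 2 * (t * ∑ x, |f x|) :=
    calc 2 * t ^ 2 * (N * σ) = 3 * t ^ 2 * (N * σ) - N * (B * σ ^ 2) := by rw [ht2]; ring
      _ ≤ 3 * t ^ 2 * ∑ x, f x ^ 2 - ∑ x, f x ^ 4 := by gcongr
      _ = ∑ x, (3 * t ^ 2 * f x ^ 2 - f x ^ 4) := by rw [sum_sub_distrib, mul_sum]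
      _ ≤ ∑ x, 2 * t ^ 3 * |f x| := sum_le_sum fun x _ => three_mul_sq_sub_pow_four_le ht (f x)
      _ = 2 * t ^ 2 * (t * ∑ x, |f x|) := by rw [← mul_sum]; ring
  have hsum : ∑ _x : α, σ / t ≤ ∑ x, (|f x| + f x) := by
    rw [sum_add_distrib, h1, add_zero, sum_const, card_univ, nsmul_eq_mul, ← mul_div_assoc,
      div_le_iff₀ ht, mul_comm _ t]
    exact le_of_mul_le_mul_left habs (by positivity)
  obtain ⟨x, -, hx⟩ := exists_le_of_sum_le univ_nonempty hsum
  have hsqrt : √(σ / B) = σ / t := by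
    rw [show σ / B = (σ / t) ^ 2 by rw [div_pow, ht2]; field_simp, Real.sqrt_sq (by positivity)]
  refine ⟨x, ?_⟩
  rcases le_or_gt (f x) 0 with h | h
  · rw [abs_of_nonpos h] at hx
    linarith [div_pos hσ ht]
  · rw [abs_of_pos h] at hx
    linarith

lemma ite_eq_add_mul_div_two {s b : ℝ} (hs : s = 1 ∨ s = -1) (hb : b = 1 ∨ b = -1) (w : ℝ) :
    (if s = b then w else 0) = (w + w * b * s) / 2 := by
  rcases hs with rfl | rfl <;> rcases hb with rfl | rfl <;> norm_num

/-- **MaxLin-AA with bounded variable occurrence.**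
Given a system of `m` equations `∏_{i ∈ I_j} x_i = b_j` over `x ∈ {-1,1}^n`, where the
`I_j` are distinct nonempty subsets of `[n]`, `b_j ∈ {-1,1}`, each equation has a positive
integral weight `w_j` with total weight `W = ∑ w_j`, and each variable occurs in at most
`ρ` equations, there is an assignment satisfying equations of total weight at least
`W/2 + (1/4)·√(m/(2ρ+1))`. -/
theorem maxlin_excess_above_average (n m ρ : ℕ)
    (I : Fin m → Finset (Fin n)) (hinj : Function.Injective I) (hne : ∀ j, I j ≠ ∅)
    (b : Fin m → ℝ) (hb : ∀ j, b j = 1 ∨ b j = -1)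
    (w : Fin m → ℕ) (hw : ∀ j, 0 < w j)
    (hρ : ∀ i : Fin n, (Finset.univ.filter (fun j => i ∈ I j)).card ≤ ρ) :
    ∃ x : Fin n → Bool,
      (∑ j : Fin m, if (∏ i ∈ I j, sgn (x i)) = b j then (w j : ℝ) else 0) ≥
        (∑ j : Fin m, (w j : ℝ)) / 2 + (1 / 4) * Real.sqrt (m / (2 * ρ + 1)) := by
  set c : Fin m → ℝ := fun j => w j * b j
  have hcm : (m : ℝ) ≤ ∑ j, c j ^ 2 := by
    calc (m : ℝ) = ∑ _j : Fin m, (1 : ℝ) := by simp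
      _ ≤ ∑ j, c j ^ 2 := sum_le_sum fun j _ => by
        have : (1 : ℝ) ≤ w j := by exact_mod_cast hw j
        rcases hb j with h | h <;> simp only [c, h] <;> nlinarith
  obtain ⟨x, hx⟩ := exists_sqrt_div_two_le_of_moments
    (fun x : Fin n → Bool => ∑ j, c j * walsh (I j) x) (σ := ∑ j, c j ^ 2) (B := 2 * ρ + 1)
    (by positivity)
    (sum_sum_mul_walsh_eq_zero I hne c)
    (by simp [sum_sq_sum_mul_walsh_of_injective hinj])
    (by simpa using sum_pow_four_sum_mul_walsh_le hinj hρ c)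
  refine ⟨x, ?_⟩
  have hsat : (∑ j, if walsh (I j) x = b j then (w j : ℝ) else 0) =
      (∑ j, (w j : ℝ)) / 2 + (∑ j, c j * walsh (I j) x) / 2 := by
    simp only [ite_eq_add_mul_div_two (walsh_eq_one_or_neg_one _ x) (hb _), ← sum_div,
      sum_add_distrib, add_div, c]
  have hsqrt : √(m / (2 * ρ + 1)) ≤ √((∑ j, c j ^ 2) / (2 * ρ + 1)) := by gcongr
  change (∑ j, if walsh (I j) x = b j then (w j : ℝ) else 0) ≥ _
  linarith
end
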